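/- arXiv:1302.1037 — 2 statements merged into one kernel-verified Lean document; each statement's English description precedes it below -/
import Mathlib

section
/- The determinant of X_s is strictly positive for every integer s ≥ 2. -/
noncomputable def xi (k : ℕ) : ℝ := 1 / (2 * Real.sqrt (4 * (k : ℝ)^2 - 1))

noncomputable def Xs (s : ℕ) : Matrix (Fin s) (Fin s) ℝ :=
  Matrix.of fun i j =>
    if i.1 = 0 ∧ j.1 = 0 then 1/2
    else if i.1 = s - 1 ∧ j.1 = s - 1 then 1 / (4 * (s : ℝ) - 2)
    else if i.1 = j.1 + 1 then xi (j.1 + 1)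
    else if j.1 = i.1 + 1 then -xi (i.1 + 1)
    else 0

lemma xi_pos (k : ℕ) (hk : 1 ≤ k) : 0 < xi k := by
  unfold xi
  have h : (0:ℝ) < 4 * (k:ℝ)^2 - 1 := by
    have : (1:ℝ) ≤ (k:ℝ) := by exact_mod_cast hk
    nlinarith
  positivity

noncomputable def Td (a d b : ℕ → ℝ) (n : ℕ) : Matrix (Fin n) (Fin n) ℝ :=
  Matrix.of fun i j =>
    if (i : ℕ) = j then d i
    else if (i : ℕ) = (j : ℕ) + 1 then a j
    else if (j : ℕ) = (i : ℕ) + 1 then b i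
    else 0

lemma Td_det_rec (a d b : ℕ → ℝ) (n : ℕ) :
    (Td a d b (n+2)).det
      = d 0 * (Td (fun m => a (m+1)) (fun m => d (m+1)) (fun m => b (m+1)) (n+1)).det
        + (- b 0) * a 0 *
          (Td (fun m => a (m+2)) (fun m => d (m+2)) (fun m => b (m+2)) n).det := by
  rw [Matrix.det_succ_row_zero, Fin.sum_univ_succ, Fin.sum_univ_succ]
  have h0 : ∀ j : Fin n, (Td a d b (n+2)) 0 j.succ.succ = 0 := by
    intro j
    simp [Td]
  rw [Finset.sum_eq_zero (fun j _ => by rw [h0]; ring)]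
  have e00 : (Td a d b (n+2)) 0 0 = d 0 := by simp [Td]
  have e01 : (Td a d b (n+2)) 0 (Fin.succ 0) = b 0 := by simp [Td]
  rw [e00, e01]
  have m0 : (Td a d b (n+2)).submatrix Fin.succ ((0 : Fin (n+2)).succAbove)
      = Td (fun m => a (m+1)) (fun m => d (m+1)) (fun m => b (m+1)) (n+1) := by
    ext i j
    simp [Td, Matrix.submatrix, Fin.succAbove_zero]
  have m1 : ((Td a d b (n+2)).submatrix Fin.succ ((Fin.succ 0 : Fin (n+2)).succAbove)).det
      = a 0 * (Td (fun m => a (m+2)) (fun m => d (m+2)) (fun m => b (m+2)) n).det := by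
    set B := (Td a d b (n+2)).submatrix Fin.succ ((Fin.succ 0 : Fin (n+2)).succAbove) with hB
    rw [Matrix.det_succ_column_zero, Fin.sum_univ_succ]
    have hz : ∀ i : Fin n, B i.succ 0 = 0 := by
      intro i
      simp [hB, Td, Matrix.submatrix, Fin.succAbove, Fin.lt_def]
    rw [Finset.sum_eq_zero (fun i _ => by rw [hz]; ring)]
    have hb00 : B 0 0 = a 0 := by
      simp [hB, Td, Matrix.submatrix, Fin.succAbove, Fin.lt_def]
    have hsub : B.submatrix ((0 : Fin (n+1)).succAbove) Fin.succ
        = Td (fun m => a (m+2)) (fun m => d (m+2)) (fun m => b (m+2)) n := by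
      ext i j
      simp [hB, Td, Matrix.submatrix, Fin.succAbove_zero, Fin.succAbove, Fin.lt_def]
    rw [hb00, hsub]
    norm_num
  rw [m0, m1]
  have : ((Fin.succ 0 : Fin (n+2)) : ℕ) = 1 := rfl
  rw [this]
  norm_num
  ring

lemma Td_det_pos : ∀ (n : ℕ) (a d b : ℕ → ℝ), (∀ m, 0 ≤ d m) → (1 ≤ n → 0 < d (n-1)) →
    (∀ m, 0 < a m * (-b m)) → 0 < (Td a d b n).det := by
  intro n
  induction n using Nat.strong_induction_on with
  | _ n ih =>
    match n with
    | 0 => intro a d b _ _ _; simp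
    | 1 =>
      intro a d b _ hlast _
      have : (Td a d b 1).det = d 0 := by
        rw [Matrix.det_fin_one]; simp [Td]
      rw [this]; exact hlast le_rfl
    | (n+2) =>
      intro a d b hd hlast hab
      rw [Td_det_rec]
      have h1 : 0 < (Td (fun m => a (m+1)) (fun m => d (m+1)) (fun m => b (m+1)) (n+1)).det := by
        apply ih (n+1) (by omega)
        · intro m; exact hd _
        · intro _; have := hlast (by omega); simpa using this
        · intro m; exact hab _
      have h2 : 0 < (Td (fun m => a (m+2)) (fun m => d (m+2)) (fun m => b (m+2)) n).det := by
        apply ih n (by omega)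
        · intro m; exact hd _
        · intro hn
          have := hlast (by omega)
          have e : n - 1 + 2 = n + 2 - 1 := by omega
          rw [e]; exact this
        · intro m; exact hab _
      have := hab 0
      have := hd 0
      nlinarith

lemma Xs_eq_Td (s : ℕ) (hs : 2 ≤ s) :
    Xs s = Td (fun m => xi (m+1))
      (fun m => if m = 0 then 1/2 else if m = s - 1 then 1 / (4 * (s:ℝ) - 2) else 0)
      (fun m => -xi (m+1)) s := by
  ext i j
  have hi := i.isLt
  have hj := j.isLt
  simp only [Xs, Td, Matrix.of_apply]
  split_ifs <;> first | rfl | omega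

theorem stmt3 (s : ℕ) (hs : 2 ≤ s) : 0 < (Xs s).det := by
  rw [Xs_eq_Td s hs]
  apply Td_det_pos
  · intro m
    have : (0:ℝ) < 4 * (s:ℝ) - 2 := by
      have : (2:ℝ) ≤ (s:ℝ) := by exact_mod_cast hs
      linarith
    split_ifs <;> positivity
  · intro _
    have h1 : s - 1 ≠ 0 := by omega
    have : (0:ℝ) < 4 * (s:ℝ) - 2 := by
      have : (2:ℝ) ≤ (s:ℝ) := by exact_mod_cast hs
      linarith
    rw [if_neg h1, if_pos rfl]
    exact div_pos one_pos this
  · intro m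
    have := xi_pos (m+1) (by omega)
    nlinarith
end

section
/- For s×s matrices A and L and an m×m matrix J, (I - h(L⊗J)) is invertible whenever I - h l_{ii} μ ≠ 0 for all diagonal entries l_{ii} of lower triangular L and all eigenvalues μ of J; in particular, if L is lower triangular with positive diagonal entries and all eigenvalues of J have nonpositive real part, then I - h(L⊗J) is invertible for all h > 0. -/
open Kronecker Matrix

lemma det_one_sub_smul_ne {m : ℕ} (J : Matrix (Fin m) (Fin m) ℂ) (c : ℂ)
    (hspec : ∀ μ ∈ spectrum ℂ J, 1 - c * μ ≠ 0) :
    ((1 : Matrix (Fin m) (Fin m) ℂ) - c • J).det ≠ 0 := by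
  by_cases hc : c = 0
  · simp [hc]
  intro hdet
  have key : (1 : Matrix (Fin m) (Fin m) ℂ) - c • J = c • (c⁻¹ • 1 - J) := by
    rw [smul_sub, smul_smul, mul_inv_cancel₀ hc, one_smul]
  rw [key, Matrix.det_smul] at hdet
  have h2 : (c⁻¹ • (1 : Matrix (Fin m) (Fin m) ℂ) - J).det = 0 := by
    rcases mul_eq_zero.mp hdet with h | h
    · exact absurd h (pow_ne_zero _ hc)
    · exact h
  have hmem : c⁻¹ ∈ spectrum ℂ J := by
    rw [spectrum.mem_iff, Algebra.algebraMap_eq_smul_one]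
    rw [Matrix.isUnit_iff_isUnit_det, isUnit_iff_ne_zero]
    simpa using h2
  have := hspec c⁻¹ hmem
  rw [mul_inv_cancel₀ hc] at this
  simp at this

theorem stmt14 (s m : ℕ) (L : Matrix (Fin s) (Fin s) ℂ)
    (J : Matrix (Fin m) (Fin m) ℂ) (h : ℝ)
    (hL : ∀ i j, i < j → L i j = 0) :
    ((∀ i, ∀ μ ∈ spectrum ℂ J, 1 - (h : ℂ) * L i i * μ ≠ 0) →
        IsUnit (1 - (h : ℂ) • (L ⊗ₖ J))) ∧
    (((∀ i, (L i i).im = 0 ∧ 0 < (L i i).re) ∧ (∀ μ ∈ spectrum ℂ J, μ.re ≤ 0) ∧ 0 < h) →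
        IsUnit (1 - (h : ℂ) • (L ⊗ₖ J))) := by
  have main : (∀ i, ∀ μ ∈ spectrum ℂ J, 1 - (h : ℂ) * L i i * μ ≠ 0) →
      IsUnit (1 - (h : ℂ) • (L ⊗ₖ J)) := by
    intro hsp
    set M : Matrix (Fin s × Fin m) (Fin s × Fin m) ℂ := 1 - (h : ℂ) • (L ⊗ₖ J) with hM
    rw [Matrix.isUnit_iff_isUnit_det, isUnit_iff_ne_zero]
    have hbt : M.BlockTriangular (fun p => OrderDual.toDual p.1) := by
      intro p q hlt
      have hpq : p.1 < q.1 := hlt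
      have hne : p ≠ q := by
        intro hpq'; rw [hpq'] at hpq; exact lt_irrefl _ hpq
      simp only [hM, Matrix.sub_apply, Matrix.smul_apply, Matrix.one_apply_ne hne,
        Matrix.kroneckerMap_apply, hL p.1 q.1 hpq, zero_mul, smul_zero, sub_zero]
    rw [hbt.det_fintype]
    apply Finset.prod_ne_zero_iff.mpr
    intro k _
    have hequiv : Function.Bijective
        (fun p : {p : Fin s × Fin m // OrderDual.toDual p.1 = k} => p.1.2) := by
      constructor
      · rintro ⟨⟨a,b⟩, ha⟩ ⟨⟨c,d⟩, hc⟩ hbd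
        have : a = c := (congrArg OrderDual.ofDual ha).trans (congrArg OrderDual.ofDual hc).symm
        simp only at hbd
        exact Subtype.ext (Prod.ext this hbd)
      · intro b
        exact ⟨⟨(OrderDual.ofDual k, b), rfl⟩, rfl⟩
    set e := Equiv.ofBijective _ hequiv with he
    have heq : (M.toSquareBlock (fun p => OrderDual.toDual p.1) k) =
        ((1 : Matrix (Fin m) (Fin m) ℂ) -
          ((h : ℂ) * L (OrderDual.ofDual k) (OrderDual.ofDual k)) • J).submatrix ⇑e ⇑e := by
      ext ⟨p, hp⟩ ⟨q, hq⟩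
      have hp1 : p.1 = OrderDual.ofDual k := congrArg OrderDual.ofDual hp
      have hq1 : q.1 = OrderDual.ofDual k := congrArg OrderDual.ofDual hq
      simp only [Matrix.toSquareBlock_def, Matrix.of_apply, hM, Matrix.sub_apply,
        Matrix.smul_apply, Matrix.kroneckerMap_apply, Matrix.submatrix_apply, he,
        Equiv.ofBijective_apply, Matrix.one_apply, Prod.ext_iff, hp1, hq1, true_and]
      congr 1
      simp [smul_eq_mul]; ring
    rw [heq, Matrix.det_submatrix_equiv_self]
    exact det_one_sub_smul_ne J _ (hsp _)
  refine ⟨main, fun ⟨h1, h2, h3⟩ => main ?_⟩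
  intro i μ hμ hcontra
  obtain ⟨him, hpos⟩ := h1 i
  have hre : ((h : ℂ) * L i i * μ).re = h * (L i i).re * μ.re := by
    simp [Complex.mul_re, Complex.mul_im, him]
  have h1' : ((h : ℂ) * L i i * μ).re = 1 := by
    have : (h : ℂ) * L i i * μ = 1 := by linear_combination -hcontra
    rw [this]; simp
  rw [hre] at h1'
  have hnp : h * (L i i).re * μ.re ≤ 0 :=
    mul_nonpos_of_nonneg_of_nonpos (by positivity) (h2 μ hμ)
  linarith
end
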